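/- Let A be a bounded self-adjoint operator on ℓ²(ℕ), let f : ℕ → ℕ satisfy f(n) ≥ n + 1 for all n, and let (c_n) be a sequence of nonnegative reals with D_{f,n}(A) ≤ c_n for all n and c_n → 0. For z ∈ ℝ define Φ_n(z) = σ_inf(P_{f(n)} (A − zI) ι_n) + c_n. Then dist(z, Sp(A)) ≤ Φ_n(z) for every z ∈ ℝ and every n ≥ 1, and Φ_n converges to the function z ↦ dist(z, Sp(A)) uniformly on every compact subset of ℝ. -/

import Mathlib

open Filter

/-- `ℓ²(ℕ)`, the Hilbert space of square-summable complex sequences. -/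
noncomputable abbrev l2 := lp (fun _ : ℕ => ℂ) 2

/-- Truncation to the first `m` coordinates: the action of `P_m^* P_m` on `ℓ²(ℕ)`. -/
noncomputable def trunc (m : ℕ) (y : l2) : l2 :=
  ∑ i ∈ Finset.range m, lp.single 2 i (y i)

/-- `x` lies in `span{e_0, …, e_{n-1}}`, i.e. in the range of `ι_n = P_n^*`. -/
def inSpan (n : ℕ) (x : l2) : Prop := ∀ i, n ≤ i → x i = 0

/-- `σ_inf(P_m T ι_n)`: the injection modulus of `P_m T` restricted to
`span{e_0, …, e_{n-1}}`. -/
noncomputable def sigmaInfTruncRestr (T : l2 →L[ℂ] l2) (m n : ℕ) : ℝ :=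
  sInf {r : ℝ | ∃ x : l2, inSpan n x ∧ ‖x‖ = 1 ∧ r = ‖trunc m (T x)‖}

/-- The dispersion `D_{f,n}(A) = ‖(I − P_{f(n)}^* P_{f(n)}) A ι_n‖`. -/
noncomputable def dispersion (f : ℕ → ℕ) (n : ℕ) (A : l2 →L[ℂ] l2) : ℝ :=
  sSup {r : ℝ | ∃ x : l2, inSpan n x ∧ ‖x‖ = 1 ∧ r = ‖A x - trunc (f n) (A x)‖}

/-- `Φ_n(z) = σ_inf(P_{f(n)} (A − zI) ι_n) + c_n`. -/
noncomputable def Phi (A : l2 →L[ℂ] l2) (f : ℕ → ℕ) (c : ℕ → ℝ) (n : ℕ) (z : ℝ) : ℝ :=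
  sigmaInfTruncRestr (A - (z : ℂ) • 1) (f n) n + c n

open Metric
open scoped ENNReal
set_option maxHeartbeats 1000000
set_option synthInstance.maxHeartbeats 400000

lemma trunc_apply (m : ℕ) (y : l2) (j : ℕ) :
    (trunc m y : l2) j = if j < m then y j else 0 := by
  simp only [trunc, lp.coeFn_sum, Finset.sum_apply, lp.single_apply, Pi.single_apply, Finset.sum_ite_eq, Finset.sum_dite_eq,
    Finset.mem_range]

lemma inSpan_trunc (m : ℕ) (y : l2) : inSpan m (trunc m y) := by
  intro i hi
  rw [trunc_apply]
  simp [Nat.not_lt.mpr hi]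

lemma inSpan.mono {n n' : ℕ} (h : n ≤ n') {x : l2} (hx : inSpan n x) : inSpan n' x :=
  fun i hi => hx i (le_trans h hi)

lemma trunc_eq_self {m : ℕ} {y : l2} (h : inSpan m y) : trunc m y = y := by
  apply lp.ext
  funext j
  rw [trunc_apply]
  by_cases hj : j < m
  · simp [hj]
  · simp [hj, h j (Nat.not_lt.mp hj)]

lemma trunc_add (m : ℕ) (x y : l2) : trunc m (x + y) = trunc m x + trunc m y := by
  apply lp.ext
  funext j
  simp only [lp.coeFn_add, Pi.add_apply, trunc_apply]
  split <;> simp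

lemma trunc_sub (m : ℕ) (x y : l2) : trunc m (x - y) = trunc m x - trunc m y := by
  apply lp.ext
  funext j
  simp only [lp.coeFn_sub, Pi.sub_apply, trunc_apply]
  split <;> simp

lemma trunc_smul (m : ℕ) (a : ℂ) (x : l2) : trunc m (a • x) = a • trunc m x := by
  apply lp.ext
  funext j
  simp only [lp.coeFn_smul, Pi.smul_apply, trunc_apply]
  split <;> simp

lemma norm_trunc_le (m : ℕ) (y : l2) : ‖trunc m y‖ ≤ ‖y‖ := by
  have hp : 0 < (2 : ℝ≥0∞).toReal := by norm_num
  have h1 : ‖trunc m y‖ ^ (2:ℝ≥0∞).toReal = ∑ i ∈ Finset.range m, ‖y i‖ ^ (2:ℝ≥0∞).toReal :=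
    lp.norm_sum_single hp _ _
  have h2 : HasSum (fun i => ‖y i‖ ^ (2:ℝ≥0∞).toReal) (‖y‖ ^ (2:ℝ≥0∞).toReal) :=
    lp.hasSum_norm hp y
  have h3 : ‖trunc m y‖ ^ (2:ℝ≥0∞).toReal ≤ ‖y‖ ^ (2:ℝ≥0∞).toReal := by
    rw [h1]
    exact sum_le_hasSum _ (fun i _ => Real.rpow_nonneg (norm_nonneg _) _) h2
  rw [show (2:ℝ≥0∞).toReal = ((2:ℕ):ℝ) by norm_num, Real.rpow_natCast, Real.rpow_natCast] at h3
  nlinarith [norm_nonneg (trunc m y), norm_nonneg y]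

lemma trunc_tendsto (y : l2) : Tendsto (fun m => trunc m y) atTop (nhds y) :=
  (lp.hasSum_single ENNReal.ofNat_ne_top y).tendsto_sum_nat



instance : Nontrivial l2 := by
  refine nontrivial_of_ne (lp.single 2 0 1) 0 fun h => ?_
  have := lp.norm_single (p := 2) (E := fun _ : ℕ => ℂ) (by norm_num) 0 (1:ℂ)
  rw [h] at this
  simp at this

instance : Nontrivial (l2 →L[ℂ] l2) := by
  refine nontrivial_of_ne 1 0 fun h => ?_
  have h2 := DFunLike.congr_fun h (lp.single 2 0 1)
  have := lp.norm_single (p := 2) (E := fun _ : ℕ => ℂ) (by norm_num) 0 (1:ℂ)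
  rw [show (1 : l2 →L[ℂ] l2) (lp.single 2 0 1) = lp.single 2 0 1 from rfl] at h2
  rw [h2] at this
  simp at this

lemma spec_real (A : l2 →L[ℂ] l2) (hA : IsSelfAdjoint A) :
    Complex.ofReal '' spectrum ℝ A = spectrum ℂ A := by
  exact hA.spectrumRestricts.algebraMap_image

-- algebraMap ℝ to CLM applied
lemma algebraMap_apply_vec (r : ℝ) (x : l2) : (algebraMap ℝ (l2 →L[ℂ] l2) r) x = (r:ℂ) • x := by
  simp [Algebra.algebraMap_eq_smul_one]
  rfl

instance : ContinuousFunctionalCalculus ℝ (l2 →L[ℂ] l2) IsSelfAdjoint :=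
  IsSelfAdjoint.instContinuousFunctionalCalculus

lemma approx_eig (A : l2 →L[ℂ] l2) (hA : IsSelfAdjoint A) {l : ℝ}
    (hl : l ∈ spectrum ℝ A) {ε : ℝ} (hε : 0 < ε) :
    ∃ y : l2, ‖y‖ = 1 ∧ ‖A y - (l:ℂ) • y‖ ≤ ε := by
  classical
  obtain ⟨ε, rfl⟩ : ∃ δ : ℝ, δ * 2 = ε := ⟨ε / 2, by ring⟩
  have hε : 0 < ε := by linarith
  set g : ℝ → ℝ := fun t => max 0 (1 - |t - l| / ε) with hg
  have hgc : Continuous g := by fun_prop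
  have hgl : g l = 1 := by simp [hg, hε.le]
  set B := cfc g A with hB
  -- 1 ∈ spectrum of B
  have hspec : (1:ℝ) ∈ spectrum ℝ B := by
    rw [hB, cfc_map_spectrum g A hA hgc.continuousOn]
    exact ⟨l, hl, hgl⟩
  have hBnorm : (1:ℝ) ≤ ‖B‖ := by
    simpa using spectrum.norm_le_norm_of_mem hspec
  -- the product is small
  have hmul : (A - algebraMap ℝ _ l) * B = cfc (fun t => (t - l) * g t) A := by
    rw [cfc_mul _ _ A (by fun_prop) (by fun_prop), cfc_sub (R := ℝ) (fun t => t) (fun _ => l) A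
      (by fun_prop) (by fun_prop), cfc_id' ℝ A, cfc_const l A hA]
  have hbound : ‖(A - algebraMap ℝ _ l) * B‖ ≤ ε := by
    rw [hmul]
    refine norm_cfc_le hε.le fun t ht => ?_
    by_cases h : |t - l| ≤ ε
    · have hg1 : |g t| ≤ 1 := by
        rw [hg]
        rw [abs_le]
        constructor
        · simp only [le_max_iff]; left; norm_num
        · simp only [max_le_iff]
          constructor
          · norm_num
          · have : 0 ≤ |t - l| / ε := div_nonneg (abs_nonneg _) hε.le
            linarith
      calc ‖(t - l) * g t‖ = |t - l| * |g t| := abs_mul _ _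
        _ ≤ ε * 1 := mul_le_mul h hg1 (abs_nonneg _) hε.le
        _ = ε := mul_one ε
    · have hgt : g t = 0 := by
        rw [hg]
        simp only [max_eq_left_iff]
        have : 1 ≤ |t - l| / ε := (one_le_div hε).mpr (le_of_not_ge h)
        linarith
      simp [hgt, hε.le]
  -- find a vector where B is big
  have hx : ∃ x : l2, ‖B x‖ > (1/2) * ‖x‖ := by
    by_contra hcon
    push_neg at hcon
    have : ‖B‖ ≤ 1/2 := ContinuousLinearMap.opNorm_le_bound B (by norm_num) hcon
    linarith
  obtain ⟨x, hx⟩ := hx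
  have hBx : 0 < ‖B x‖ := lt_of_le_of_lt (by positivity) hx
  set y : l2 := ((‖B x‖⁻¹ : ℝ) : ℂ) • B x with hy
  have hyn : ‖y‖ = 1 := by
    rw [hy, norm_smul]
    simp [norm_inv, abs_of_pos hBx, inv_mul_cancel₀ hBx.ne']
  refine ⟨y, hyn, ?_⟩
  have hABx : ‖A (B x) - (l:ℂ) • (B x)‖ ≤ ε * ‖x‖ := by
    have := ContinuousLinearMap.le_opNorm ((A - algebraMap ℝ _ l) * B) x
    have heq : ((A - algebraMap ℝ _ l) * B) x = A (B x) - (l:ℂ) • (B x) := by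
      rw [ContinuousLinearMap.mul_apply, ContinuousLinearMap.sub_apply, algebraMap_apply_vec]
    rw [heq] at this
    exact this.trans (mul_le_mul_of_nonneg_right hbound (norm_nonneg _))
  have key : A y - (l:ℂ) • y = ((‖B x‖⁻¹ : ℝ) : ℂ) • (A (B x) - (l:ℂ) • (B x)) := by
    rw [hy, map_smul, smul_sub, smul_comm]
  rw [key, norm_smul]
  have h1 : ‖((‖B x‖⁻¹ : ℝ) : ℂ)‖ = ‖B x‖⁻¹ := by
    simp [abs_of_pos hBx]
  rw [h1]
  calc ‖B x‖⁻¹ * ‖A (B x) - (l:ℂ) • (B x)‖ ≤ ‖B x‖⁻¹ * (ε * ‖x‖) := by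
        exact mul_le_mul_of_nonneg_left hABx (inv_nonneg.mpr hBx.le)
    _ ≤ ε * 2 := by
        rw [inv_mul_le_iff₀ hBx]
        calc ε * ‖x‖ = (ε * 2) * ((1/2) * ‖x‖) := by ring
          _ ≤ (ε * 2) * ‖B x‖ := by nlinarith
          _ = ‖B x‖ * (ε * 2) := by ring

lemma dist_le_norm (A : l2 →L[ℂ] l2) (hA : IsSelfAdjoint A) (z : ℝ) (x : l2) (hx : ‖x‖ = 1) :
    Metric.infDist (z:ℂ) (spectrum ℂ A) ≤ ‖A x - (z:ℂ) • x‖ := by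
  classical
  set d := Metric.infDist (z:ℂ) (spectrum ℂ A) with hd
  rcases le_or_gt d 0 with hd0 | hd0
  · exact hd0.trans (norm_nonneg _)
  have hspec : ∀ t ∈ spectrum ℝ A, d ≤ |t - z| := by
    intro t ht
    have htC : (t:ℂ) ∈ spectrum ℂ A := by
      rw [← spec_real A hA]; exact ⟨t, ht, rfl⟩
    have := Metric.infDist_le_dist_of_mem (x := (z:ℂ)) htC
    rw [Complex.isometry_ofReal.dist_eq, Real.dist_eq, abs_sub_comm] at this
    exact this
  set h : ℝ → ℝ := fun t => (t - z)⁻¹ with hh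
  have hne : ∀ t ∈ spectrum ℝ A, t - z ≠ 0 := by
    intro t ht
    have := hspec t ht
    intro hcon
    rw [hcon] at this
    simp at this
    linarith
  have hc : ContinuousOn h (spectrum ℝ A) :=
    ContinuousOn.inv₀ (by fun_prop) hne
  set R := cfc h A with hR
  have hRn : ‖R‖ ≤ d⁻¹ := by
    refine norm_cfc_le (inv_nonneg.mpr hd0.le) fun t ht => ?_
    rw [hh]
    simp only [Real.norm_eq_abs, abs_inv]
    exact inv_anti₀ hd0 (hspec t ht)
  have hAz : A - algebraMap ℝ (l2 →L[ℂ] l2) z = cfc (fun t : ℝ => t - z) A := by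
    rw [cfc_sub (R := ℝ) (fun t => t) (fun _ => z) A (by fun_prop) (by fun_prop),
      cfc_id' ℝ A, cfc_const z A hA]
  have hmul : R * (A - algebraMap ℝ (l2 →L[ℂ] l2) z) = 1 := by
    rw [hAz, hR, ← cfc_mul h (fun t : ℝ => t - z) A hc (by fun_prop)]
    rw [cfc_congr (g := fun _ : ℝ => (1:ℝ)) (fun t ht => by
      simp only [hh]
      field_simp [hne t ht])]
    exact cfc_one ℝ A
  have happ : R ((A - algebraMap ℝ (l2 →L[ℂ] l2) z) x) = x := by
    have := DFunLike.congr_fun hmul x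
    simpa [ContinuousLinearMap.mul_apply] using this
  have h1 : (1:ℝ) ≤ d⁻¹ * ‖A x - (z:ℂ) • x‖ := by
    calc (1:ℝ) = ‖x‖ := hx.symm
      _ = ‖R ((A - algebraMap ℝ (l2 →L[ℂ] l2) z) x)‖ := by rw [happ]
      _ ≤ ‖R‖ * ‖(A - algebraMap ℝ (l2 →L[ℂ] l2) z) x‖ := ContinuousLinearMap.le_opNorm _ _
      _ ≤ d⁻¹ * ‖A x - (z:ℂ) • x‖ := by
          rw [ContinuousLinearMap.sub_apply, algebraMap_apply_vec]
          exact mul_le_mul_of_nonneg_right hRn (by positivity) |>.trans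
            (mul_le_mul_of_nonneg_left le_rfl (inv_nonneg.mpr hd0.le))
  have := mul_le_mul_of_nonneg_left h1 hd0.le
  rw [mul_one, ← mul_assoc, mul_inv_cancel₀ hd0.ne', one_mul] at this
  exact this

section aux
set_option maxHeartbeats 1000000

lemma Tapply (A : l2 →L[ℂ] l2) (z : ℝ) (x : l2) :
    (A - (z:ℂ) • 1) x = A x - (z:ℂ) • x := by
  simp [ContinuousLinearMap.sub_apply, ContinuousLinearMap.smul_apply,
    ContinuousLinearMap.one_apply]
  rfl

lemma inSpan_smul {n : ℕ} {x : l2} (a : ℂ) (h : inSpan n x) : inSpan n (a • x) := by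
  intro i hi
  rw [lp.coeFn_smul, Pi.smul_apply, h i hi, smul_zero]

/-- The set over which the infimum in `sigmaInfTruncRestr` is taken. -/
def Sset (A : l2 →L[ℂ] l2) (f : ℕ → ℕ) (z : ℝ) (n : ℕ) : Set ℝ :=
  {r : ℝ | ∃ x : l2, inSpan n x ∧ ‖x‖ = 1 ∧ r = ‖trunc (f n) ((A - (z:ℂ) • 1) x)‖}

lemma sigma_eq (A : l2 →L[ℂ] l2) (f : ℕ → ℕ) (z : ℝ) (n : ℕ) :
    sigmaInfTruncRestr (A - (z : ℂ) • 1) (f n) n = sInf (Sset A f z n) := rfl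

lemma e0_norm : ‖(lp.single 2 0 1 : l2)‖ = 1 := by
  have := lp.norm_single (p := 2) (E := fun _ : ℕ => ℂ) (by norm_num) 0 (1:ℂ)
  simpa using this

lemma e0_inSpan {n : ℕ} (hn : 1 ≤ n) : inSpan n (lp.single 2 0 1 : l2) := by
  intro i hi
  exact lp.single_apply_ne 2 0 1 (by omega)

lemma Sset_nonempty (A : l2 →L[ℂ] l2) (f : ℕ → ℕ) (z : ℝ) {n : ℕ} (hn : 1 ≤ n) :
    (Sset A f z n).Nonempty :=
  ⟨_, ⟨lp.single 2 0 1, e0_inSpan hn, e0_norm, rfl⟩⟩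

lemma Sset_bddBelow (A : l2 →L[ℂ] l2) (f : ℕ → ℕ) (z : ℝ) (n : ℕ) :
    BddBelow (Sset A f z n) :=
  ⟨0, fun r ⟨x, _, _, hr⟩ => hr ▸ norm_nonneg _⟩
end aux

lemma norm_T_le (A : l2 →L[ℂ] l2) (f : ℕ → ℕ) (hf : ∀ n, n + 1 ≤ f n)
    (c : ℕ → ℝ) (hcD : ∀ n, dispersion f n A ≤ c n)
    (z : ℝ) (n : ℕ) {x : l2} (h1 : inSpan n x) (h2 : ‖x‖ = 1) :
    ‖(A - (z:ℂ) • 1) x‖ ≤ ‖trunc (f n) ((A - (z:ℂ) • 1) x)‖ + c n := by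
  set T := A - (z:ℂ) • 1 with hT
  have hx_fn : inSpan (f n) x := h1.mono (by have := hf n; omega)
  have htr : T x - trunc (f n) (T x) = A x - trunc (f n) (A x) := by
    rw [hT, Tapply, trunc_sub, trunc_smul, trunc_eq_self hx_fn]
    abel
  have hdisp : ‖A x - trunc (f n) (A x)‖ ≤ dispersion f n A := by
    refine le_csSup ⟨2 * ‖A‖, ?_⟩ ⟨x, h1, h2, rfl⟩
    rintro r ⟨x', h1', h2', rfl⟩
    have hAx' : ‖A x'‖ ≤ ‖A‖ := by
      simpa [h2'] using A.le_opNorm x'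
    calc ‖A x' - trunc (f n) (A x')‖ ≤ ‖A x'‖ + ‖trunc (f n) (A x')‖ := norm_sub_le _ _
      _ ≤ ‖A‖ + ‖A‖ := add_le_add hAx' ((norm_trunc_le _ _).trans hAx')
      _ = 2 * ‖A‖ := by ring
  have hre : trunc (f n) (T x) + (T x - trunc (f n) (T x)) = T x := by abel
  calc ‖T x‖ = ‖trunc (f n) (T x) + (T x - trunc (f n) (T x))‖ := by rw [hre]
    _ ≤ ‖trunc (f n) (T x)‖ + ‖T x - trunc (f n) (T x)‖ := norm_add_le _ _
    _ ≤ ‖trunc (f n) (T x)‖ + c n := by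
        rw [htr]; exact add_le_add_right (hdisp.trans (hcD n)) _

lemma lower (A : l2 →L[ℂ] l2) (hA : IsSelfAdjoint A)
    (f : ℕ → ℕ) (hf : ∀ n, n + 1 ≤ f n)
    (c : ℕ → ℝ) (hcD : ∀ n, dispersion f n A ≤ c n)
    (z : ℝ) {n : ℕ} (hn : 1 ≤ n) :
    Metric.infDist (z : ℂ) (spectrum ℂ A) ≤ sInf (Sset A f z n) + c n := by
  rw [← sub_le_iff_le_add]
  refine le_csInf (Sset_nonempty A f z hn) ?_
  rintro r ⟨x, h1, h2, rfl⟩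
  rw [sub_le_iff_le_add]
  have := dist_le_norm A hA z x h2
  rw [← Tapply] at this
  exact this.trans (norm_T_le A f hf c hcD z n h1 h2)

lemma lip (A : l2 →L[ℂ] l2) (f : ℕ → ℕ) (z z' : ℝ) {n : ℕ} (hn : 1 ≤ n) :
    sInf (Sset A f z n) ≤ sInf (Sset A f z' n) + |z - z'| := by
  rw [← sub_le_iff_le_add]
  refine le_csInf (Sset_nonempty A f z' hn) ?_
  rintro r ⟨x, h1, h2, rfl⟩
  rw [sub_le_iff_le_add]
  have hmem : ‖trunc (f n) ((A - (z:ℂ) • 1) x)‖ ∈ Sset A f z n := ⟨x, h1, h2, rfl⟩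
  refine (csInf_le (Sset_bddBelow A f z n) hmem).trans ?_
  have hdec : (A - (z:ℂ) • 1) x = (A - (z':ℂ) • 1) x + (((z' - z : ℝ)):ℂ) • x := by
    rw [Tapply, Tapply]
    push_cast
    rw [sub_smul]
    abel
  rw [hdec, trunc_add, trunc_smul]
  refine (norm_add_le _ _).trans ?_
  have : ‖(((z' - z : ℝ)):ℂ) • trunc (f n) x‖ ≤ |z - z'| := by
    rw [norm_smul]
    have h3 : ‖(((z' - z : ℝ)):ℂ)‖ = |z' - z| := by
      rw [Complex.norm_real, Real.norm_eq_abs]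
    rw [h3, abs_sub_comm]
    calc |z - z'| * ‖trunc (f n) x‖ ≤ |z - z'| * 1 := by
          refine mul_le_mul_of_nonneg_left ?_ (abs_nonneg _)
          rw [← h2]; exact norm_trunc_le _ _
      _ = |z - z'| := mul_one _
  exact add_le_add_right this _

lemma upper (A : l2 →L[ℂ] l2) (hA : IsSelfAdjoint A)
    (f : ℕ → ℕ) (z : ℝ) {ε : ℝ} (hε : 0 < ε) :
    ∀ᶠ n in atTop, sInf (Sset A f z n) ≤ Metric.infDist (z : ℂ) (spectrum ℂ A) + ε := by
  classical
  set d := Metric.infDist (z : ℂ) (spectrum ℂ A) with hdd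
  -- nearest spectral point
  obtain ⟨lC, hlC, hld⟩ :=
    (spectrum.isCompact A).exists_infDist_eq_dist (spectrum.nonempty A) (z : ℂ)
  obtain ⟨l, hlR, rfl⟩ : ∃ l : ℝ, l ∈ spectrum ℝ A ∧ (l : ℂ) = lC := by
    have := (spec_real A hA).symm ▸ hlC
    obtain ⟨l, hl, hl2⟩ := this
    exact ⟨l, hl, hl2⟩
  have hdl : d = |z - l| := by
    rw [hdd, hld, Complex.isometry_ofReal.dist_eq, Real.dist_eq]
  -- approximate eigenvector
  obtain ⟨y, hy1, hy2⟩ := approx_eig A hA hlR (by positivity : (0:ℝ) < ε / 8)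
  have hd0 : 0 ≤ d := Metric.infDist_nonneg
  set T := A - (z:ℂ) • 1 with hT
  have hTy : ‖T y‖ ≤ d + ε / 8 := by
    have hdec : T y = (A y - (l:ℂ) • y) + (((l - z : ℝ)):ℂ) • y := by
      rw [hT, Tapply]
      push_cast
      rw [sub_smul]
      abel
    rw [hdec]
    refine (norm_add_le _ _).trans ?_
    have h3 : ‖(((l - z : ℝ)):ℂ) • y‖ = |l - z| := by
      rw [norm_smul, Complex.norm_real, Real.norm_eq_abs, hy1, mul_one]
    rw [h3, abs_sub_comm, ← hdl]
    linarith
  set C := ‖T‖ with hC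
  have hC0 : 0 ≤ C := norm_nonneg _
  set δ := min (1/2 : ℝ) (ε / (8 * (C + 1))) with hδ
  have hδ0 : 0 < δ := by
    apply lt_min (by norm_num)
    positivity
  have hδhalf : δ ≤ 1/2 := min_le_left _ _
  have hδC : 2 * δ * C ≤ ε / 4 := by
    have h1 : δ ≤ ε / (8 * (C + 1)) := min_le_right _ _
    have h2 : C / (C + 1) ≤ 1 := by
      rw [div_le_one (by linarith)]; linarith
    calc 2 * δ * C ≤ 2 * (ε / (8 * (C + 1))) * C := by nlinarith
      _ = (ε / 4) * (C / (C + 1)) := by field_simp; ring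
      _ ≤ (ε / 4) * 1 := by nlinarith
      _ = ε / 4 := mul_one _
  -- truncate y
  obtain ⟨m, hm⟩ := Metric.tendsto_atTop.mp (trunc_tendsto y) δ hδ0
  have hm' : ‖trunc m y - y‖ < δ := by
    have := hm m le_rfl
    rwa [dist_eq_norm] at this
  set w := trunc m y with hw
  have hwn : |‖w‖ - 1| ≤ δ := by
    have := abs_norm_sub_norm_le w y
    rw [hy1] at this
    exact this.trans hm'.le
  have hw0 : (0:ℝ) < ‖w‖ := by
    rw [abs_le] at hwn
    linarith [hwn.1]
  set x' : l2 := ((‖w‖⁻¹ : ℝ) : ℂ) • w with hx'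
  have hx'n : ‖x'‖ = 1 := by
    rw [hx', norm_smul, Complex.norm_real, Real.norm_eq_abs, abs_of_pos (inv_pos.mpr hw0),
      inv_mul_cancel₀ hw0.ne']
  have hx'span : inSpan m x' := inSpan_smul _ (inSpan_trunc m y)
  have hx'y : ‖x' - y‖ ≤ 2 * δ := by
    have hsplit : x' - y = (x' - w) + (w - y) := by abel
    have hxw : ‖x' - w‖ = |1 - ‖w‖| := by
      have : x' - w = (((‖w‖⁻¹ - 1 : ℝ)):ℂ) • w := by
        rw [hx']
        push_cast
        rw [sub_smul, one_smul]
      rw [this, norm_smul, Complex.norm_real, Real.norm_eq_abs]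
      rw [show |‖w‖⁻¹ - 1| * ‖w‖ = |(‖w‖⁻¹ - 1) * ‖w‖| by
        rw [abs_mul, abs_of_pos hw0]]
      congr 1
      field_simp
    rw [hsplit]
    refine (norm_add_le _ _).trans ?_
    rw [hxw, abs_sub_comm]
    linarith [hwn, hm'.le]
  have hTx' : ‖T x'‖ ≤ d + ε := by
    have h1 : ‖T x' - T y‖ ≤ C * (2 * δ) := by
      rw [← map_sub]
      exact (T.le_opNorm _).trans (mul_le_mul_of_nonneg_left hx'y hC0)
    calc ‖T x'‖ ≤ ‖T y‖ + ‖T x' - T y‖ := by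
          linarith [norm_sub_norm_le (T x') (T y)]
      _ ≤ (d + ε / 8) + C * (2 * δ) := add_le_add hTy h1
      _ ≤ d + ε := by nlinarith
  filter_upwards [eventually_ge_atTop (max m 1)] with n hn
  have hn1 : 1 ≤ n := le_trans (le_max_right m 1) hn
  have hnm : m ≤ n := le_trans (le_max_left m 1) hn
  have hmem : ‖trunc (f n) (T x')‖ ∈ Sset A f z n :=
    ⟨x', hx'span.mono hnm, hx'n, rfl⟩
  refine (csInf_le (Sset_bddBelow A f z n) hmem).trans ?_
  exact (norm_trunc_le _ _).trans hTx'


theorem stmt16 (A : l2 →L[ℂ] l2) (hA : IsSelfAdjoint A)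
    (f : ℕ → ℕ) (hf : ∀ n, n + 1 ≤ f n)
    (c : ℕ → ℝ) (hc0 : ∀ n, 0 ≤ c n)
    (hcD : ∀ n, dispersion f n A ≤ c n)
    (hc : Tendsto c atTop (nhds 0)) :
    (∀ z : ℝ, ∀ n : ℕ, 1 ≤ n →
        Metric.infDist (z : ℂ) (spectrum ℂ A) ≤ Phi A f c n z) ∧
    ∀ K : Set ℝ, IsCompact K →
      TendstoUniformlyOn (fun n z => Phi A f c n z)
        (fun z => Metric.infDist (z : ℂ) (spectrum ℂ A)) atTop K := by
  have hmain : ∀ z : ℝ, ∀ n : ℕ, 1 ≤ n →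
      Metric.infDist (z : ℂ) (spectrum ℂ A) ≤ Phi A f c n z := by
    intro z n hn
    simp only [Phi, sigma_eq]
    exact lower A hA f hf c hcD z hn
  refine ⟨hmain, ?_⟩
  intro K hK
  rw [Metric.tendstoUniformlyOn_iff]
  intro ε hε
  have hcev : ∀ᶠ n in atTop, c n < ε / 4 := by
    have := Metric.tendsto_nhds.mp hc (ε/4) (by positivity)
    filter_upwards [this] with n hn
    rw [Real.dist_eq, sub_zero] at hn
    exact (abs_lt.mp hn).2
  obtain ⟨t, htK, hcov⟩ := hK.elim_nhds_subcover (fun z => Metric.ball z (ε/8))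
    (fun z _ => Metric.ball_mem_nhds z (by positivity))
  have hev : ∀ᶠ n in atTop, ∀ i ∈ t,
      sInf (Sset A f i n) ≤ Metric.infDist (i : ℂ) (spectrum ℂ A) + ε / 4 := by
    rw [eventually_all_finset]
    intro i _
    exact upper A hA f i (by positivity)
  filter_upwards [hev, hcev, eventually_ge_atTop 1] with n hsn hcn hn1
  intro z hz
  obtain ⟨i, hit, hzi⟩ : ∃ i ∈ t, z ∈ Metric.ball i (ε/8) := by
    have := hcov hz
    simpa using this
  have hzi' : |z - i| < ε / 8 := by
    rw [Metric.mem_ball, Real.dist_eq] at hzi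
    exact hzi
  have hlow : Metric.infDist (z : ℂ) (spectrum ℂ A) ≤ Phi A f c n z := hmain z n hn1
  have hup : Phi A f c n z ≤ Metric.infDist (z : ℂ) (spectrum ℂ A) + (3/4) * ε := by
    simp only [Phi, sigma_eq]
    have h1 : sInf (Sset A f z n) ≤ sInf (Sset A f i n) + |z - i| := lip A f z i hn1
    have h2 : sInf (Sset A f i n) ≤ Metric.infDist (i : ℂ) (spectrum ℂ A) + ε / 4 := hsn i hit
    have h3 : Metric.infDist (i : ℂ) (spectrum ℂ A) ≤
        Metric.infDist (z : ℂ) (spectrum ℂ A) + |z - i| := by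
      have := Metric.infDist_le_infDist_add_dist (x := (i:ℂ)) (y := (z:ℂ)) (s := spectrum ℂ A)
      rw [Complex.isometry_ofReal.dist_eq, Real.dist_eq, abs_sub_comm] at this
      exact this
    linarith [hzi'.le, hcn.le]
  rw [Real.dist_eq, abs_lt]
  constructor <;> linarith
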